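/- Let $E_{max}>0$, let $S\colon[0,E_{max}]\to\mathbb{R}$ be continuous and strictly positive, let $t(E)=\int_E^{E_{max}}1/S(E')\,dE'$ with inverse $E(t)$, and let $\rho\colon\mathbb{R}^3\to\mathbb{R}$ be differentiable and strictly positive. Let $\Sigma_t\colon[0,E_{max}]\to\mathbb{R}$ and $\Sigma_s\colon[0,E_{max}]\times[-1,1]\to\mathbb{R}$ be continuous. Suppose $\psi_c,\psi_u\colon [0,E_{max}]\times\mathbb{R}^3\times\mathbb{S}^2\to\mathbb{R}$ are differentiable in $E$ and $\mathbf{x}$ and integrable in angle, and that $\psi_c$ satisfies $\boldsymbol\Omega\cdot\nabla_x\psi_c + \Sigma_t(E)\rho(\mathbf{x})\psi_c = \partial_E\big(S(E)\rho(\mathbf{x})\psi_c\big) + \int_{\mathbb{S}^2}\Sigma_s(E,\boldsymbol\Omega\cdot\boldsymbol\Omega')\rho(\mathbf{x})\,(\psi_u+\psi_c)(E,\mathbf{x},\boldsymbol\Omega')\,d\boldsymbol\Omega'$. Define $\widetilde\psi_c(t,\mathbf{x},\boldsymbol\Omega) := \rho(\mathbf{x})S(E(t))\psi_c(E(t),\mathbf{x},\boldsymbol\Omega)$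 and $\widetilde\psi_u$ analogously. Then for all $t\in(0,t(0))$: $\partial_t\widetilde\psi_c + \boldsymbol\Omega\cdot\nabla_x\big(\widetilde\psi_c/\rho(\mathbf{x})\big) + \Sigma_t(E(t))\,\widetilde\psi_c = \int_{\mathbb{S}^2}\Sigma_s(E(t),\boldsymbol\Omega\cdot\boldsymbol\Omega')\,\big(\widetilde\psi_u+\widetilde\psi_c\big)(t,\mathbf{x},\boldsymbol\Omega')\,d\boldsymbol\Omega'$. -/

import Mathlib

open MeasureTheory Set

/-- The unit sphere `𝕊²` in `ℝ³`. -/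
abbrev UnitSphere : Set (EuclideanSpace ℝ (Fin 3)) :=
  Metric.sphere (0 : EuclideanSpace ℝ (Fin 3)) 1

/-- The surface measure on the unit sphere `𝕊² ⊆ ℝ³`. -/
noncomputable def sphereMeasure : Measure UnitSphere :=
  (volume : Measure (EuclideanSpace ℝ (Fin 3))).toSphere

/-!
Since `t' = -1/S`, the inverse `E(t)` of the pseudo-time has derivative `-S(E(t))`, so by the
chain rule `∂ₜ ψ̃_c = -ρ S ∂_E (S ψ_c)` at `E = E(t)`. Multiplying the collided equation at
`E(t)` by `S(E(t))` then turns each of its terms into the matching term of the transformed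
equation; the density cancels in `ψ̃_c / ρ`.
-/

open Filter Topology RealInnerProductSpace

theorem continuousAt_of_antitoneOn_of_image_mem_nhds {α β : Type*} [LinearOrder α]
    [TopologicalSpace α] [OrderTopology α] [LinearOrder β] [TopologicalSpace β] [OrderTopology β]
    [DenselyOrdered β] {f : α → β} {s : Set α} {a : α} (h_anti : AntitoneOn f s)
    (hs : s ∈ 𝓝 a) (hfs : f '' s ∈ 𝓝 (f a)) : ContinuousAt f a :=
  continuousAt_of_monotoneOn_of_image_mem_nhds (β := βᵒᵈ) h_anti hs hfs

theorem strictAntiOn_integral_one_div {S : ℝ → ℝ} {a b : ℝ} (hS : ContinuousOn S (Icc a b))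
    (hpos : ∀ x ∈ Icc a b, 0 < S x) :
    StrictAntiOn (fun x => ∫ y in x..b, 1 / S y) (Icc a b) := by
  have hint : ∀ x ∈ Icc a b, ∀ y ∈ Icc a b, IntervalIntegrable (fun z => 1 / S z) volume x y :=
    fun x hx y hy => ((continuousOn_const.div hS fun z hz => (hpos z hz).ne').mono
      (uIcc_subset_Icc hx hy)).intervalIntegrable
  intro x hx y hy hxy
  have hsplit := intervalIntegral.integral_add_adjacent_intervals (hint x hx y hy)
    (hint y hy b (right_mem_Icc.2 (hy.1.trans hy.2)))
  have hpos : 0 < ∫ z in x..y, 1 / S z :=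
    intervalIntegral.intervalIntegral_pos_of_pos_on (hint x hx y hy)
      (fun z hz => one_div_pos.2 (hpos z ⟨hx.1.trans hz.1.le, hz.2.le.trans hy.2⟩)) hxy
  dsimp only
  linarith

theorem hasDerivAt_integral_one_div {S : ℝ → ℝ} {a b x : ℝ} (hS : ContinuousOn S (Icc a b))
    (hne : ∀ y ∈ Icc a b, S y ≠ 0) (hx : x ∈ Ioo a b) :
    HasDerivAt (fun x => ∫ y in x..b, 1 / S y) (-(1 / S x)) x := by
  have hcont : ContinuousOn (fun y => 1 / S y) (Icc a b) := continuousOn_const.div hS hne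
  have hxb : uIcc x b ⊆ Icc a b :=
    uIcc_subset_Icc (Ioo_subset_Icc_self hx) (right_mem_Icc.2 (hx.1.trans hx.2).le)
  exact intervalIntegral.integral_hasDerivAt_left (hcont.mono hxb).intervalIntegrable
    ((hcont.mono Ioo_subset_Icc_self).stronglyMeasurableAtFilter isOpen_Ioo x hx)
    (hcont.continuousAt (Icc_mem_nhds hx.1 hx.2))

section PseudoTime

variable {S t E : ℝ → ℝ} {a b s : ℝ}

theorem pseudoTimeInverse_mem_Ioo (htb : t b = 0) (hE : MapsTo E (Icc 0 (t a)) (Icc a b))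
    (htE : ∀ s ∈ Icc 0 (t a), t (E s) = s) (hs : s ∈ Ioo 0 (t a)) : E s ∈ Ioo a b := by
  have hsIcc : s ∈ Icc 0 (t a) := Ioo_subset_Icc_self hs
  obtain ⟨haE, hEb⟩ := hE hsIcc
  refine ⟨haE.lt_of_ne ?_, hEb.lt_of_ne ?_⟩ <;> rintro hEs
  · exact hs.2.ne (by rw [hEs, htE s hsIcc])
  · exact hs.1.ne (by rw [← htE s hsIcc, hEs, htb])

theorem continuousAt_pseudoTimeInverse (hS : ContinuousOn S (Icc a b))
    (hpos : ∀ x ∈ Icc a b, 0 < S x) (ht : ∀ x, t x = ∫ y in x..b, 1 / S y)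
    (hE : MapsTo E (Icc 0 (t a)) (Icc a b)) (hEt : ∀ x ∈ Icc a b, E (t x) = x)
    (htE : ∀ s ∈ Icc 0 (t a), t (E s) = s) (hs : s ∈ Ioo 0 (t a)) : ContinuousAt E s := by
  have ht_anti : StrictAntiOn t (Icc a b) := funext ht ▸ strictAntiOn_integral_one_div hS hpos
  have htb : t b = 0 := by rw [ht, intervalIntegral.integral_same]
  have hE_anti : AntitoneOn E (Icc 0 (t a)) := fun s₁ h₁ s₂ h₂ h₁₂ =>
    (ht_anti.le_iff_ge (hE h₁) (hE h₂)).1 (by rwa [htE s₁ h₁, htE s₂ h₂])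
  have hsurj : Ioo a b ⊆ E '' Icc 0 (t a) := by
    intro x hx
    have hxIcc : x ∈ Icc a b := Ioo_subset_Icc_self hx
    refine ⟨t x, ⟨?_, ?_⟩, hEt x hxIcc⟩
    · exact htb ▸ ht_anti.antitoneOn hxIcc (right_mem_Icc.2 (hx.1.trans hx.2).le) hx.2.le
    · exact ht_anti.antitoneOn (left_mem_Icc.2 (hx.1.trans hx.2).le) hxIcc hx.1.le
  have hEs := pseudoTimeInverse_mem_Ioo htb hE htE hs
  exact continuousAt_of_antitoneOn_of_image_mem_nhds hE_anti (Icc_mem_nhds hs.1 hs.2)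
    (mem_of_superset (Ioo_mem_nhds hEs.1 hEs.2) hsurj)

theorem hasDerivAt_pseudoTimeInverse (hS : ContinuousOn S (Icc a b))
    (hpos : ∀ x ∈ Icc a b, 0 < S x) (ht : ∀ x, t x = ∫ y in x..b, 1 / S y)
    (hE : MapsTo E (Icc 0 (t a)) (Icc a b)) (hEt : ∀ x ∈ Icc a b, E (t x) = x)
    (htE : ∀ s ∈ Icc 0 (t a), t (E s) = s) (hs : s ∈ Ioo 0 (t a)) :
    HasDerivAt E (-S (E s)) s := by
  have hEs := pseudoTimeInverse_mem_Ioo (by rw [ht, intervalIntegral.integral_same]) hE htE hs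
  have ht' : HasDerivAt t (-(1 / S (E s))) (E s) := funext ht ▸
    hasDerivAt_integral_one_div hS (fun x hx => (hpos x hx).ne') hEs
  have hinv := ht'.of_local_left_inverse
    (continuousAt_pseudoTimeInverse hS hpos ht hE hEt htE hs)
    (by simpa using (hpos _ (Ioo_subset_Icc_self hEs)).ne')
    (eventually_of_mem (Ioo_mem_nhds hs.1 hs.2) fun y hy => htE y (Ioo_subset_Icc_self hy))
  rwa [one_div, ← neg_inv, inv_inv] at hinv

end PseudoTime

theorem pseudo_time_transformed_collided_equation_general
    (Emax : ℝ)
    (S : ℝ → ℝ)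
    (hScont : ContinuousOn S (Icc 0 Emax))
    (hSpos : ∀ E ∈ Icc 0 Emax, 0 < S E)
    (t : ℝ → ℝ)
    (ht : ∀ E : ℝ, t E = ∫ E' in E..Emax, 1 / S E')
    (Efun : ℝ → ℝ)
    (hEmaps : Set.MapsTo Efun (Icc 0 (t 0)) (Icc 0 Emax))
    (hEleft : ∀ E ∈ Icc 0 Emax, Efun (t E) = E)
    (hEright : ∀ s ∈ Icc 0 (t 0), t (Efun s) = s)
    (ρ : EuclideanSpace ℝ (Fin 3) → ℝ)
    (hρpos : ∀ x, 0 < ρ x)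
    (Sigt : ℝ → ℝ)
    (Sigs : ℝ → ℝ → ℝ)
    (ψc ψu : ℝ → EuclideanSpace ℝ (Fin 3) → UnitSphere → ℝ)
    -- differentiability in energy
    (hSψcE : ∀ E ∈ Icc 0 Emax, ∀ (x : EuclideanSpace ℝ (Fin 3)) (Ω : UnitSphere),
      DifferentiableAt ℝ (fun e => S e * ψc e x Ω) E)
    -- differentiability in space
    (hψcx : ∀ E ∈ Icc 0 Emax, ∀ (x : EuclideanSpace ℝ (Fin 3)) (Ω : UnitSphere),
      DifferentiableAt ℝ (fun y => ψc E y Ω) x)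
    -- the collided equation in energy form
    (hcollided : ∀ E ∈ Icc 0 Emax, ∀ (x : EuclideanSpace ℝ (Fin 3)) (Ω : UnitSphere),
      fderiv ℝ (fun y => ψc E y Ω) x (Ω : EuclideanSpace ℝ (Fin 3)) +
          Sigt E * ρ x * ψc E x Ω =
        deriv (fun e => S e * ρ x * ψc e x Ω) E +
          ∫ Ω' : UnitSphere,
            Sigs E (inner ℝ (Ω : EuclideanSpace ℝ (Fin 3)) (Ω' : EuclideanSpace ℝ (Fin 3)) : ℝ) *
              ρ x * (ψu E x Ω' + ψc E x Ω') ∂sphereMeasure)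
    -- the transformed fluxes
    (ψtc ψtu : ℝ → EuclideanSpace ℝ (Fin 3) → UnitSphere → ℝ)
    (hψtc : ∀ (s : ℝ) (x : EuclideanSpace ℝ (Fin 3)) (Ω : UnitSphere),
      ψtc s x Ω = ρ x * S (Efun s) * ψc (Efun s) x Ω)
    (hψtu : ∀ (s : ℝ) (x : EuclideanSpace ℝ (Fin 3)) (Ω : UnitSphere),
      ψtu s x Ω = ρ x * S (Efun s) * ψu (Efun s) x Ω) :
    -- then the transformed collided equation holds in pseudo-time
    ∀ s ∈ Ioo 0 (t 0), ∀ (x : EuclideanSpace ℝ (Fin 3)) (Ω : UnitSphere),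
      deriv (fun τ => ψtc τ x Ω) s +
          fderiv ℝ (fun y => ψtc s y Ω / ρ y) x (Ω : EuclideanSpace ℝ (Fin 3)) +
          Sigt (Efun s) * ψtc s x Ω =
        ∫ Ω' : UnitSphere,
          Sigs (Efun s) (inner ℝ (Ω : EuclideanSpace ℝ (Fin 3)) (Ω' : EuclideanSpace ℝ (Fin 3)) : ℝ) *
            (ψtu s x Ω' + ψtc s x Ω') ∂sphereMeasure := by
  intro s hs x Ω
  have hEs : Efun s ∈ Icc 0 Emax := hEmaps (Ioo_subset_Icc_self hs)
  have hEfun := hasDerivAt_pseudoTimeInverse hScont hSpos ht hEmaps hEleft hEright hs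
  have hSψc := hSψcE _ hEs x Ω
  have hderiv_time : deriv (fun τ => ψtc τ x Ω) s =
      ρ x * (deriv (fun e => S e * ψc e x Ω) (Efun s) * -S (Efun s)) := by
    simp_rw [hψtc, mul_assoc]
    exact ((hSψc.hasDerivAt.comp s hEfun).const_mul (ρ x)).deriv
  have hderiv_space : fderiv ℝ (fun y => ψtc s y Ω / ρ y) x Ω =
      S (Efun s) * fderiv ℝ (fun y => ψc (Efun s) y Ω) x Ω := by
    have hdiv : (fun y => ψtc s y Ω / ρ y) = fun y => S (Efun s) * ψc (Efun s) y Ω :=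
      funext fun y => by rw [hψtc]; field_simp [(hρpos y).ne']
    rw [hdiv, fderiv_const_mul (hψcx _ hEs x Ω)]
    rfl
  have hderiv_energy : deriv (fun e => S e * ρ x * ψc e x Ω) (Efun s) =
      deriv (fun e => S e * ψc e x Ω) (Efun s) * ρ x := by
    simp_rw [mul_right_comm (S _) (ρ x)]
    exact deriv_mul_const hSψc _
  have hscatter : (∫ Ω' : UnitSphere, Sigs (Efun s) ⟪Ω.1, Ω'.1⟫ * (ψtu s x Ω' + ψtc s x Ω')
        ∂sphereMeasure) = S (Efun s) * ∫ Ω' : UnitSphere, Sigs (Efun s) ⟪Ω.1, Ω'.1⟫ * ρ x *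
          (ψu (Efun s) x Ω' + ψc (Efun s) x Ω') ∂sphereMeasure := by
    rw [← integral_const_mul]
    congr 1 with Ω'
    rw [hψtu, hψtc]
    ring
  have hc := hcollided (Efun s) hEs x Ω
  rw [hderiv_energy] at hc
  rw [hderiv_time, hderiv_space, hscatter, hψtc]
  linear_combination S (Efun s) * hc

/-- Pseudo-time form of the collided equation: if `ψ_c` solves the collided
continuous-slowing-down equation (with water-equivalence scaling by the density
`ρ`), then the transformed flux `ψ̃_c(t,x,Ω) = ρ(x) S(E(t)) ψ_c(E(t),x,Ω)`
solves `∂_t ψ̃_c + Ω·∇ₓ(ψ̃_c/ρ) + Σ_t(E(t)) ψ̃_c = ∫ Σ_s(E(t),Ω·Ω')(ψ̃ᵤ+ψ̃_c) dΩ'`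
for every pseudo-time `t` in the interior of `[0, t(0)]`. -/
theorem pseudo_time_transformed_collided_equation
    (Emax : ℝ) (hEmax : 0 < Emax)
    (S : ℝ → ℝ)
    (hScont : ContinuousOn S (Icc 0 Emax))
    (hSpos : ∀ E ∈ Icc 0 Emax, 0 < S E)
    (t : ℝ → ℝ)
    (ht : ∀ E : ℝ, t E = ∫ E' in E..Emax, 1 / S E')
    (Efun : ℝ → ℝ)
    (hEmaps : Set.MapsTo Efun (Icc 0 (t 0)) (Icc 0 Emax))
    (hEleft : ∀ E ∈ Icc 0 Emax, Efun (t E) = E)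
    (hEright : ∀ s ∈ Icc 0 (t 0), t (Efun s) = s)
    (ρ : EuclideanSpace ℝ (Fin 3) → ℝ)
    (hρdiff : Differentiable ℝ ρ)
    (hρpos : ∀ x, 0 < ρ x)
    (Sigt : ℝ → ℝ) (hSigt : ContinuousOn Sigt (Icc 0 Emax))
    (Sigs : ℝ → ℝ → ℝ)
    (hSigs : ContinuousOn (fun p : ℝ × ℝ => Sigs p.1 p.2) (Icc 0 Emax ×ˢ Icc (-1) 1))
    (ψc ψu : ℝ → EuclideanSpace ℝ (Fin 3) → UnitSphere → ℝ)
    -- differentiability in energy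
    (hψcE : ∀ E ∈ Icc 0 Emax, ∀ (x : EuclideanSpace ℝ (Fin 3)) (Ω : UnitSphere),
      DifferentiableAt ℝ (fun e => ψc e x Ω) E)
    (hψuE : ∀ E ∈ Icc 0 Emax, ∀ (x : EuclideanSpace ℝ (Fin 3)) (Ω : UnitSphere),
      DifferentiableAt ℝ (fun e => ψu e x Ω) E)
    (hSψcE : ∀ E ∈ Icc 0 Emax, ∀ (x : EuclideanSpace ℝ (Fin 3)) (Ω : UnitSphere),
      DifferentiableAt ℝ (fun e => S e * ψc e x Ω) E)
    -- differentiability in space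
    (hψcx : ∀ E ∈ Icc 0 Emax, ∀ (x : EuclideanSpace ℝ (Fin 3)) (Ω : UnitSphere),
      DifferentiableAt ℝ (fun y => ψc E y Ω) x)
    (hψux : ∀ E ∈ Icc 0 Emax, ∀ (x : EuclideanSpace ℝ (Fin 3)) (Ω : UnitSphere),
      DifferentiableAt ℝ (fun y => ψu E y Ω) x)
    -- integrability in angle
    (hIu : ∀ E ∈ Icc 0 Emax, ∀ (x : EuclideanSpace ℝ (Fin 3)) (Ω : UnitSphere),
      Integrable (fun Ω' : UnitSphere =>
        Sigs E (inner ℝ (Ω : EuclideanSpace ℝ (Fin 3)) (Ω' : EuclideanSpace ℝ (Fin 3)) : ℝ) *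
          ψu E x Ω') sphereMeasure)
    (hIc : ∀ E ∈ Icc 0 Emax, ∀ (x : EuclideanSpace ℝ (Fin 3)) (Ω : UnitSphere),
      Integrable (fun Ω' : UnitSphere =>
        Sigs E (inner ℝ (Ω : EuclideanSpace ℝ (Fin 3)) (Ω' : EuclideanSpace ℝ (Fin 3)) : ℝ) *
          ψc E x Ω') sphereMeasure)
    -- the collided equation in energy form
    (hcollided : ∀ E ∈ Icc 0 Emax, ∀ (x : EuclideanSpace ℝ (Fin 3)) (Ω : UnitSphere),
      fderiv ℝ (fun y => ψc E y Ω) x (Ω : EuclideanSpace ℝ (Fin 3)) +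
          Sigt E * ρ x * ψc E x Ω =
        deriv (fun e => S e * ρ x * ψc e x Ω) E +
          ∫ Ω' : UnitSphere,
            Sigs E (inner ℝ (Ω : EuclideanSpace ℝ (Fin 3)) (Ω' : EuclideanSpace ℝ (Fin 3)) : ℝ) *
              ρ x * (ψu E x Ω' + ψc E x Ω') ∂sphereMeasure)
    -- the transformed fluxes
    (ψtc ψtu : ℝ → EuclideanSpace ℝ (Fin 3) → UnitSphere → ℝ)
    (hψtc : ∀ (s : ℝ) (x : EuclideanSpace ℝ (Fin 3)) (Ω : UnitSphere),
      ψtc s x Ω = ρ x * S (Efun s) * ψc (Efun s) x Ω)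
    (hψtu : ∀ (s : ℝ) (x : EuclideanSpace ℝ (Fin 3)) (Ω : UnitSphere),
      ψtu s x Ω = ρ x * S (Efun s) * ψu (Efun s) x Ω) :
    -- then the transformed collided equation holds in pseudo-time
    ∀ s ∈ Ioo 0 (t 0), ∀ (x : EuclideanSpace ℝ (Fin 3)) (Ω : UnitSphere),
      deriv (fun τ => ψtc τ x Ω) s +
          fderiv ℝ (fun y => ψtc s y Ω / ρ y) x (Ω : EuclideanSpace ℝ (Fin 3)) +
          Sigt (Efun s) * ψtc s x Ω =
        ∫ Ω' : UnitSphere,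
          Sigs (Efun s) (inner ℝ (Ω : EuclideanSpace ℝ (Fin 3)) (Ω' : EuclideanSpace ℝ (Fin 3)) : ℝ) *
            (ψtu s x Ω' + ψtc s x Ω') ∂sphereMeasure :=
  pseudo_time_transformed_collided_equation_general Emax S hScont hSpos t ht Efun hEmaps hEleft
    hEright ρ hρpos Sigt Sigs ψc ψu hSψcE hψcx hcollided ψtc ψtu hψtc hψtu
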